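/- arXiv:1808.05116 — 6 statements merged into one kernel-verified Lean document; each statement's English description precedes it below -/
import Mathlib

section
/- Let n be a positive integer and (a,b), (a',b') pairs of natural numbers with a+b ≡ a'+b' (mod 2), a ≥ a', and b ≥ b'. Let X_n denote the position after n steps of the simple random walk on ℤ² starting at the origin, where each of the four steps (±1,0), (0,±1) has probability 1/4. Then Pr[X_n = (a,b)] ≤ Pr[X_n = (a',b')]. -/
/-- The step set of the simple random walk on `ℤ²`. -/
def rwStep : Fin 4 → ℤ × ℤ := ![(1, 0), (-1, 0), (0, 1), (0, -1)]

/-- The probability that the simple random walk on `ℤ²` of length `n`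
(each of the four unit steps having probability `1/4`) ends at `v`. -/
noncomputable def rwProb (n : ℕ) (v : ℤ × ℤ) : ℝ :=
  ((Finset.univ.filter (fun f : Fin n → Fin 4 => ∑ i, rwStep (f i) = v)).card : ℝ) / 4 ^ n

/-!
In the rotated coordinates `u = x + y`, `v = x - y` every step of the walk moves `u` and `v`
by `±1` independently, so the number of walks of length `n` ending at `(a, b)` is
`W (a + b) * W (a - b)`, where `W k = C(n, (n + k) / 2)` counts the `±1` sequences with sum `k`.
Since `C(n, m + 1) * C(n, p + 1) ≤ C(n, m) * C(n, p)` whenever `n ≤ m + p`, the probability does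
not increase along the moves `(a, b) ↦ (a + 1, b + 1)` and `(a, b) ↦ (a + 2, b)` in the
quadrant, and `(a, b)` is reached from `(a', b')` by such moves (up to swapping the coordinates).
-/

open Finset

theorem Nat.choose_succ_mul_choose_succ_le {n m p : ℕ} (h : n ≤ m + p) :
    n.choose (m + 1) * n.choose (p + 1) ≤ n.choose m * n.choose p := by
  have hprod : (n - m) * (n - p) ≤ (m + 1) * (p + 1) :=
    calc (n - m) * (n - p) ≤ (p + 1) * (m + 1) := Nat.mul_le_mul (by omega) (by omega)
      _ = (m + 1) * (p + 1) := Nat.mul_comm _ _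
  refine Nat.le_of_mul_le_mul_right ?_ (Nat.mul_pos m.succ_pos p.succ_pos)
  calc n.choose (m + 1) * n.choose (p + 1) * ((m + 1) * (p + 1))
      = n.choose (m + 1) * (m + 1) * (n.choose (p + 1) * (p + 1)) := by ring
    _ = n.choose m * n.choose p * ((n - m) * (n - p)) := by
      rw [Nat.choose_succ_right_eq, Nat.choose_succ_right_eq]; ring
    _ ≤ n.choose m * n.choose p * ((m + 1) * (p + 1)) := Nat.mul_le_mul_left _ hprod

/-- The number of `±1` sequences of length `n` with sum `k`, a sequence being encoded by the set
of positions of its `+1` steps. -/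
def pmCount (n : ℕ) (k : ℤ) : ℕ :=
  #{s : Finset (Fin n) | 2 * (#s : ℤ) - n = k}

theorem pmCount_two_mul_sub (n m : ℕ) : pmCount n (2 * m - n) = n.choose m := by
  have hcard : #(powersetCard m (univ : Finset (Fin n))) = n.choose m := by simp
  rw [← hcard, pmCount, powersetCard_eq_filter, powerset_univ]
  congr 1
  ext s
  simp only [mem_filter, mem_univ, true_and]
  omega

theorem exists_of_pmCount_ne_zero {n : ℕ} {k : ℤ} (h : pmCount n k ≠ 0) :
    ∃ m ≤ n, k = 2 * m - n := by
  obtain ⟨s, hs⟩ := Finset.card_ne_zero.mp h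
  refine ⟨#s, ?_, ?_⟩
  · simpa using card_le_univ s
  · simp only [mem_filter, mem_univ, true_and] at hs
    exact hs.symm

theorem pmCount_neg (n : ℕ) (k : ℤ) : pmCount n (-k) = pmCount n k := by
  refine card_nbij' compl compl ?_ ?_ (fun s _ => compl_compl s) (fun s _ => compl_compl s) <;>
  · intro s hs
    simp only [coe_filter, mem_univ, true_and, Set.mem_ofPred_eq, card_compl,
      Fintype.card_fin] at hs ⊢
    have := card_le_univ s
    simp only [Fintype.card_fin] at this
    push_cast [this]
    omega

theorem pmCount_add_two_mul_le {n : ℕ} {k l : ℤ} (h : 0 ≤ k + l) :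
    pmCount n (k + 2) * pmCount n (l + 2) ≤ pmCount n k * pmCount n l := by
  by_cases hk : pmCount n (k + 2) = 0
  · simp [hk]
  by_cases hl : pmCount n (l + 2) = 0
  · simp [hl]
  obtain ⟨m, hmn, hm⟩ := exists_of_pmCount_ne_zero hk
  obtain ⟨p, hpn, hp⟩ := exists_of_pmCount_ne_zero hl
  obtain ⟨m, rfl⟩ : ∃ m', m = m' + 1 := ⟨m - 1, by omega⟩
  obtain ⟨p, rfl⟩ : ∃ p', p = p' + 1 := ⟨p - 1, by omega⟩
  rw [hm, hp, show k = 2 * (m : ℤ) - n by push_cast at hm; omega,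
    show l = 2 * (p : ℤ) - n by push_cast at hp; omega]
  simp only [pmCount_two_mul_sub]
  exact Nat.choose_succ_mul_choose_succ_le (by omega)

theorem pmCount_add_two_le {n : ℕ} {k : ℤ} (h : 0 ≤ k) : pmCount n (k + 2) ≤ pmCount n k :=
  Nat.mul_self_le_mul_self_iff.mp (pmCount_add_two_mul_le (by omega))

/-- Rotating by 45° and scaling by `√2`, `(x, y) ↦ (x + y, x - y)`, turns the four unit steps
into the four pairs of signs; a sign is recorded as `true` for `+1`. -/
def rwStepSigns : Fin 4 ≃ Bool × Bool where
  toFun := ![(true, true), (false, false), (true, false), (false, true)]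
  invFun c := if c.1 then (if c.2 then 0 else 2) else (if c.2 then 3 else 1)
  left_inv := by decide
  right_inv := by decide

theorem rwStep_fst_add_snd (s : Fin 4) :
    (rwStep s).1 + (rwStep s).2 = if (rwStepSigns s).1 then 1 else -1 := by
  revert s; decide

theorem rwStep_fst_sub_snd (s : Fin 4) :
    (rwStep s).1 - (rwStep s).2 = if (rwStepSigns s).2 then 1 else -1 := by
  revert s; decide

theorem sum_ite_mem_one_neg_one {ι : Type*} [Fintype ι] [DecidableEq ι] (s : Finset ι) :
    ∑ i, (if i ∈ s then (1 : ℤ) else -1) = 2 * #s - Fintype.card ι := by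
  rw [← sum_add_sum_compl s, sum_ite_of_true (fun _ h => h),
    sum_ite_of_false (fun _ h => mem_compl.mp h), sum_const, sum_const, card_compl,
    nsmul_eq_mul, nsmul_eq_mul, Nat.cast_sub (card_le_univ s)]
  ring

def Finset.equivBoolFun (ι : Type*) [Fintype ι] [DecidableEq ι] : Finset ι ≃ (ι → Bool) where
  toFun s i := decide (i ∈ s)
  invFun g := {i | g i}
  left_inv s := by ext; simp
  right_inv g := by funext; simp

def rwWalkSigns (n : ℕ) : (Fin n → Fin 4) ≃ Finset (Fin n) × Finset (Fin n) :=
  ((Equiv.arrowCongr (Equiv.refl _) rwStepSigns).trans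
    (Equiv.arrowProdEquivProdArrow _ _ _)).trans
    ((Finset.equivBoolFun _).symm.prodCongr (Finset.equivBoolFun _).symm)

theorem sum_rwStep_eq_iff (n : ℕ) (f : Fin n → Fin 4) (a b : ℤ) :
    ∑ i, rwStep (f i) = (a, b) ↔
      2 * #(rwWalkSigns n f).1 - n = a + b ∧ 2 * #(rwWalkSigns n f).2 - n = a - b := by
  have hadd : ∑ i, ((rwStep (f i)).1 + (rwStep (f i)).2) = 2 * #(rwWalkSigns n f).1 - n := by
    simpa [rwWalkSigns, Finset.equivBoolFun, rwStep_fst_add_snd] using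
      sum_ite_mem_one_neg_one (rwWalkSigns n f).1
  have hsub : ∑ i, ((rwStep (f i)).1 - (rwStep (f i)).2) = 2 * #(rwWalkSigns n f).2 - n := by
    simpa [rwWalkSigns, Finset.equivBoolFun, rwStep_fst_sub_snd] using
      sum_ite_mem_one_neg_one (rwWalkSigns n f).2
  rw [← hadd, ← hsub, sum_add_distrib, sum_sub_distrib, Prod.ext_iff, Prod.fst_sum, Prod.snd_sum]
  omega

theorem card_rwWalks_eq (n : ℕ) (a b : ℤ) :
    #{f : Fin n → Fin 4 | ∑ i, rwStep (f i) = (a, b)} =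
      pmCount n (a + b) * pmCount n (a - b) := by
  rw [pmCount, pmCount, ← card_product, ← filter_product]
  exact card_equiv (rwWalkSigns n) fun f => by simp [sum_rwStep_eq_iff]

theorem rwProb_eq (n : ℕ) (a b : ℤ) :
    rwProb n (a, b) = (pmCount n (a + b) * pmCount n (a - b) : ℕ) / 4 ^ n := by
  rw [rwProb, card_rwWalks_eq]

theorem rwProb_le_rwProb_iff (n : ℕ) (a b c d : ℤ) :
    rwProb n (a, b) ≤ rwProb n (c, d) ↔
      pmCount n (a + b) * pmCount n (a - b) ≤ pmCount n (c + d) * pmCount n (c - d) := by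
  rw [rwProb_eq, rwProb_eq, div_le_div_iff_of_pos_right (by positivity), Nat.cast_le]

theorem rwProb_swap (n : ℕ) (a b : ℤ) : rwProb n (b, a) = rwProb n (a, b) := by
  rw [rwProb_eq, rwProb_eq, add_comm, ← neg_sub, pmCount_neg]

theorem rwProb_add_one_add_one_le (n : ℕ) {a b : ℤ} (h : 0 ≤ a + b) :
    rwProb n (a + 1, b + 1) ≤ rwProb n (a, b) := by
  rw [rwProb_le_rwProb_iff, show a + 1 + (b + 1) = a + b + 2 by ring,
    show a + 1 - (b + 1) = a - b by ring]
  exact Nat.mul_le_mul_right _ (pmCount_add_two_le h)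

theorem rwProb_add_two_le (n : ℕ) {a : ℤ} (b : ℤ) (h : 0 ≤ a) :
    rwProb n (a + 2, b) ≤ rwProb n (a, b) := by
  rw [rwProb_le_rwProb_iff, show a + 2 + b = a + b + 2 by ring,
    show a + 2 - b = a - b + 2 by ring]
  exact pmCount_add_two_mul_le (by omega)

theorem rwProb_add_add_le (n k : ℕ) {a b : ℤ} (h : 0 ≤ a + b) :
    rwProb n (a + k, b + k) ≤ rwProb n (a, b) := by
  induction k with
  | zero => simp
  | succ k ih =>
    push_cast
    rw [← add_assoc, ← add_assoc]
    exact (rwProb_add_one_add_one_le n (by omega)).trans ih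

theorem rwProb_add_two_mul_le (n k : ℕ) {a : ℤ} (b : ℤ) (h : 0 ≤ a) :
    rwProb n (a + 2 * k, b) ≤ rwProb n (a, b) := by
  induction k with
  | zero => simp
  | succ k ih =>
    rw [Nat.cast_succ, mul_add_one, ← add_assoc]
    exact (rwProb_add_two_le n b (by omega)).trans ih

theorem stmt0_general (n : ℕ) (a b a' b' : ℕ)
    (hpar : (a + b) % 2 = (a' + b') % 2) (ha : a' ≤ a) (hb : b' ≤ b) :
    rwProb n ((a : ℤ), (b : ℤ)) ≤ rwProb n ((a' : ℤ), (b' : ℤ)) := by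
  wlog hd : b - b' ≤ a - a' generalizing a b a' b'
  · rw [← rwProb_swap n (a : ℤ), ← rwProb_swap n (a' : ℤ)]
    exact this b a b' a' (by omega) hb ha (by omega)
  obtain ⟨k, hk⟩ : ∃ k, a - a' = b - b' + 2 * k := ⟨(a - a' - (b - b')) / 2, by omega⟩
  calc rwProb n (a, b)
      = rwProb n ((a' + 2 * k : ℤ) + (b - b' : ℕ), (b' : ℤ) + (b - b' : ℕ)) := by
        congr 2 <;> omega
    _ ≤ rwProb n (a' + 2 * k, b') := rwProb_add_add_le n _ (by positivity)
    _ ≤ rwProb n (a', b') := rwProb_add_two_mul_le n k _ (by positivity)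

theorem stmt0 (n : ℕ) (hn : 0 < n) (a b a' b' : ℕ)
    (hpar : (a + b) % 2 = (a' + b') % 2) (ha : a' ≤ a) (hb : b' ≤ b) :
    rwProb n ((a : ℤ), (b : ℤ)) ≤ rwProb n ((a' : ℤ), (b' : ℤ)) :=
  stmt0_general n a b a' b' hpar ha hb
end

section
/- Let n be a positive integer and (a,b), (a',b') pairs of natural numbers with a+b = a'+b' and |a-b| ≥ |a'-b'|. Let X_n denote the position after n steps of the simple random walk on ℤ² starting at the origin. Then Pr[X_n = (a,b)] ≤ Pr[X_n = (a',b')]. -/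
open Finset

def pmStep (b : Bool) : ℤ := if b then 1 else -1

def pmWalkCount (n : ℕ) (k : ℤ) : ℕ := #{g : Fin n → Bool | ∑ i, pmStep (g i) = k}

lemma sum_pmStep {ι : Type*} [Fintype ι] (g : ι → Bool) :
    ∑ i, pmStep (g i) = 2 * #{i | g i} - Fintype.card ι := by
  have hsplit := card_filter_add_card_filter_not (s := (univ : Finset ι)) (fun i => g i = true)
  rw [card_univ] at hsplit
  simp only [pmStep, sum_ite, sum_const, nsmul_eq_mul, mul_one, mul_neg_one]
  omega

lemma pmWalkCount_two_mul_sub (n p : ℕ) : pmWalkCount n (2 * p - n) = n.choose p := by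
  have hcond (g : Fin n → Bool) : ∑ i, pmStep (g i) = 2 * p - n ↔ #{i | g i} = p := by
    rw [sum_pmStep, Fintype.card_fin]; omega
  rw [pmWalkCount, filter_congr fun g _ => hcond g, ← card_fin n, ← card_powersetCard,
    card_univ, Fintype.card_fin]
  refine card_nbij' (fun g => ({i | g i} : Finset (Fin n))) (fun s i => decide (i ∈ s))
    ?_ ?_ ?_ ?_ <;> intro _ _ <;> simp_all [mem_powersetCard]

lemma exists_eq_two_mul_sub_of_pmWalkCount_ne_zero {n : ℕ} {k : ℤ} (h : pmWalkCount n k ≠ 0) :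
    ∃ p ≤ n, k = 2 * p - n := by
  obtain ⟨g, hg⟩ := card_ne_zero.mp h
  rw [mem_filter, sum_pmStep, Fintype.card_fin] at hg
  exact ⟨#{i | g i}, by simpa using card_filter_le univ fun i => g i, hg.2.symm⟩

lemma pmWalkCount_neg (n : ℕ) (k : ℤ) : pmWalkCount n (-k) = pmWalkCount n k := by
  have hnot (g : Fin n → Bool) : ∑ i, pmStep (!g i) = -∑ i, pmStep (g i) := by
    rw [← sum_neg_distrib]
    exact sum_congr rfl fun i _ => by cases g i <;> rfl
  refine card_nbij' (fun g i => !g i) (fun g i => !g i) ?_ ?_ ?_ ?_ <;> intro g _ <;> simp_all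

lemma pmWalkCount_abs (n : ℕ) (k : ℤ) : pmWalkCount n |k| = pmWalkCount n k := by
  rcases abs_choice k with h | h
  · rw [h]
  · rw [h, pmWalkCount_neg]

lemma Nat.choose_le_choose_of_le_half {n i j : ℕ} (hij : i ≤ j) (hj : j ≤ n / 2) :
    n.choose i ≤ n.choose j := by
  induction j, hij using Nat.le_induction with
  | base => exact le_rfl
  | succ j _ ih => exact (ih (by omega)).trans (Nat.choose_le_succ_of_lt_half_left (by omega))

lemma pmWalkCount_le_of_nonneg_of_le {n : ℕ} {k k' : ℤ} (hk' : 0 ≤ k') (hle : k' ≤ k)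
    (hpar : 2 ∣ k - k') :
    pmWalkCount n k ≤ pmWalkCount n k' := by
  by_cases h0 : pmWalkCount n k = 0
  · omega
  obtain ⟨p, hp, rfl⟩ := exists_eq_two_mul_sub_of_pmWalkCount_ne_zero h0
  obtain ⟨q, rfl⟩ : ∃ q : ℕ, k' = 2 * q - n := ⟨p - ((2 * p - n - k') / 2).toNat, by omega⟩
  rw [pmWalkCount_two_mul_sub, pmWalkCount_two_mul_sub,
    ← Nat.choose_symm hp, ← Nat.choose_symm (show q ≤ n by omega)]
  exact Nat.choose_le_choose_of_le_half (by omega) (by omega)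

lemma pmWalkCount_le_of_abs_le {n : ℕ} {k k' : ℤ} (habs : |k'| ≤ |k|) (hpar : 2 ∣ k - k') :
    pmWalkCount n k ≤ pmWalkCount n k' := by
  rw [← pmWalkCount_abs n k, ← pmWalkCount_abs n k']
  refine pmWalkCount_le_of_nonneg_of_le (abs_nonneg k') habs ?_
  rcases abs_choice k with h | h <;> rcases abs_choice k' with h' | h' <;> rw [h, h'] <;> omega

/-- The 45° rotation `(x, y) ↦ (x + y, x - y)` on the four unit steps, with `true` for `+1`. -/
def diagStep : Fin 4 ≃ Bool × Bool where
  toFun := ![(true, true), (false, false), (true, false), (false, true)]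
  invFun
    | (true, true) => 0
    | (false, false) => 1
    | (true, false) => 2
    | (false, true) => 3
  left_inv := by decide
  right_inv := by decide

lemma rwStep_fst_add_snd_s1 (c : Fin 4) : (rwStep c).1 + (rwStep c).2 = pmStep (diagStep c).1 := by
  fin_cases c <;> rfl

lemma rwStep_fst_sub_snd_s1 (c : Fin 4) : (rwStep c).1 - (rwStep c).2 = pmStep (diagStep c).2 := by
  fin_cases c <;> rfl

lemma sum_rwStep_eq_iff_s1 {ι : Type*} [Fintype ι] (f : ι → Fin 4) (v : ℤ × ℤ) :
    ∑ i, rwStep (f i) = v ↔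
      ∑ i, pmStep (diagStep (f i)).1 = v.1 + v.2 ∧ ∑ i, pmStep (diagStep (f i)).2 = v.1 - v.2 := by
  simp only [← rwStep_fst_add_snd_s1, ← rwStep_fst_sub_snd_s1, sum_add_distrib, sum_sub_distrib,
    ← Prod.fst_sum, ← Prod.snd_sum, Prod.ext_iff]
  omega

lemma card_walks_eq_mul (n : ℕ) (v : ℤ × ℤ) :
    #{f : Fin n → Fin 4 | ∑ i, rwStep (f i) = v} =
      pmWalkCount n (v.1 + v.2) * pmWalkCount n (v.1 - v.2) := by
  rw [pmWalkCount, pmWalkCount, ← card_product]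
  refine card_nbij' (fun f => (fun i => (diagStep (f i)).1, fun i => (diagStep (f i)).2))
    (fun g i => diagStep.symm (g.1 i, g.2 i)) ?_ ?_ ?_ ?_ <;> intro _ _ <;>
    simp_all [sum_rwStep_eq_iff_s1]

theorem stmt1_general (n : ℕ) (a b a' b' : ℕ)
    (hsum : a + b = a' + b') (habs : |(a' : ℤ) - (b' : ℤ)| ≤ |(a : ℤ) - (b : ℤ)|) :
    rwProb n ((a : ℤ), (b : ℤ)) ≤ rwProb n ((a' : ℤ), (b' : ℤ)) := by
  have hsumℤ : (a : ℤ) + b = a' + b' := by exact_mod_cast hsum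
  have hdiff : pmWalkCount n (a - b) ≤ pmWalkCount n (a' - b') :=
    pmWalkCount_le_of_abs_le habs (by omega)
  unfold rwProb
  rw [card_walks_eq_mul, card_walks_eq_mul, hsumℤ]
  gcongr

theorem stmt1 (n : ℕ) (hn : 0 < n) (a b a' b' : ℕ)
    (hsum : a + b = a' + b') (habs : |(a' : ℤ) - (b' : ℤ)| ≤ |(a : ℤ) - (b : ℤ)|) :
    rwProb n ((a : ℤ), (b : ℤ)) ≤ rwProb n ((a' : ℤ), (b' : ℤ)) :=
  stmt1_general n a b a' b' hsum habs
end

section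
/- Let w be an element of the free group F_d on generators x_1,...,x_d whose image in the abelianization ℤ^d is a primitive vector (i.e., the gcd of its coordinates is 1). Then for every group G, the word map w: G^d → G induced by substitution is surjective. -/
/-!
Substituting `x j ↦ g ^ a j` sends a word `w` to `g ^ ⟪a, ab(w)⟫`, where `ab(w)` is the vector of
exponent sums of `w`. If `ab(w)` is primitive, Bézout gives `a` with `⟪a, ab(w)⟫ = 1`, so every `g`
is a value of the word map.
-/

/-- The exponent sum of the generator `x i` in a word `w` of the free group,
i.e. the `i`-th coordinate of the image of `w` in the abelianization `ℤ^d`. -/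
def expSum {d : ℕ} (i : Fin d) (w : FreeGroup (Fin d)) : ℤ :=
  Multiplicative.toAdd
    ((FreeGroup.lift fun j => Multiplicative.ofAdd (if j = i then (1 : ℤ) else 0)) w)

open Finset

section ExpSum

variable {d : ℕ} (i : Fin d)

@[simp] lemma expSum_of (j : Fin d) : expSum i (FreeGroup.of j) = if j = i then 1 else 0 := by
  simp [expSum]

@[simp] lemma expSum_one : expSum i 1 = 0 := by
  simp [expSum]

@[simp] lemma expSum_mul (x y : FreeGroup (Fin d)) :
    expSum i (x * y) = expSum i x + expSum i y := by
  simp [expSum]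

@[simp] lemma expSum_inv (x : FreeGroup (Fin d)) : expSum i x⁻¹ = -expSum i x := by
  simp [expSum]

end ExpSum

lemma lift_zpow_apply {d : ℕ} {G : Type*} [Group G] (g : G) (a : Fin d → ℤ)
    (w : FreeGroup (Fin d)) :
    FreeGroup.lift (fun j => g ^ a j) w = g ^ ∑ i, expSum i w * a i := by
  induction w using FreeGroup.induction_on with
  | C1 => simp
  | of j => simp
  | inv_of j ih => simp [ih, ← zpow_neg]
  | mul x y hx hy => simp [hx, hy, add_mul, sum_add_distrib, zpow_add]

theorem stmt3 (d : ℕ) (w : FreeGroup (Fin d))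
    (hw : Finset.univ.gcd (fun i => expSum i w) = 1) :
    ∀ (G : Type*) [Group G],
      Function.Surjective (fun g : Fin d → G => (FreeGroup.lift g) w) := by
  intro G _ g
  obtain ⟨a, ha⟩ := Finset.gcd_eq_sum_mul univ (fun i => expSum i w)
  exact ⟨fun j => g ^ a j, by simp only [lift_zpow_apply, ← ha, hw, zpow_one]⟩
end

section
/- Let G be a finite group, Z a central subgroup of G, and h ∈ G with image g ∈ G/Z. Then |C_{G/Z}(g)| ≤ |C_G(h)|, where C denotes the centralizer. -/
/-!
Let `K ≤ G` be the preimage of `C_{G/Z}(g)`, so `|K| = |Z| · |C_{G/Z}(g)|`. For `x ∈ K` the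
commutator `⁅x, h⁆` lies in `Z`, and `⁅x, h⁆ = ⁅y, h⁆` exactly when `x⁻¹ y` centralizes `h`; so
`x ↦ ⁅x, h⁆` embeds the cosets of `C_G(h) ∩ K` in `K` into `Z`, giving `|K| ≤ |Z| · |C_G(h)|`.
-/

open Subgroup
open scoped commutatorElement

theorem commutatorElement_eq_commutatorElement_iff {G : Type*} [Group G] (x y h : G) :
    ⁅x, h⁆ = ⁅y, h⁆ ↔ x⁻¹ * y ∈ centralizer {h} := by
  rw [mem_centralizer_singleton_iff, commutatorElement_def, commutatorElement_def, mul_left_inj]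
  constructor <;> intro e
  · calc x⁻¹ * y * h = x⁻¹ * (y * h * y⁻¹) * y := by group
      _ = h * (x⁻¹ * y) := by rw [← e]; group
  · calc x * h * x⁻¹ = x * (h * (x⁻¹ * y)) * y⁻¹ := by group
      _ = y * h * y⁻¹ := by rw [← e]; group

theorem index_centralizer_subgroupOf_le {G : Type*} [Group G] (N H : Subgroup G) [Finite N]
    (h : G) (hH : ∀ x ∈ H, ⁅x, h⁆ ∈ N) :
    ((centralizer {h}).subgroupOf H).index ≤ Nat.card N := by
  let f : H ⧸ (centralizer {h}).subgroupOf H → N :=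
    Quotient.lift (fun x : H => ⟨⁅(x : G), h⁆, hH x x.2⟩) fun x y hxy => by
      rw [Subtype.mk.injEq, commutatorElement_eq_commutatorElement_iff]
      exact mem_subgroupOf.mp (QuotientGroup.leftRel_apply.mp hxy)
  refine Nat.card_le_card_of_injective f ?_
  rintro ⟨x⟩ ⟨y⟩ hxy
  exact Quotient.sound (QuotientGroup.leftRel_apply.mpr (mem_subgroupOf.mpr
    ((commutatorElement_eq_commutatorElement_iff _ _ h).mp (congrArg Subtype.val hxy))))

theorem card_le_card_centralizer_mul_card {G : Type*} [Group G] [Finite G] (N H : Subgroup G)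
    (h : G) (hH : ∀ x ∈ H, ⁅x, h⁆ ∈ N) :
    Nat.card H ≤ Nat.card (centralizer {h}) * Nat.card N := by
  rw [← ((centralizer {h}).subgroupOf H).card_mul_index]
  gcongr
  · exact Nat.card_le_card_of_injective (fun x => (⟨x, x.2⟩ : centralizer {h}))
      fun x y hxy => Subtype.ext (Subtype.ext (congrArg Subtype.val hxy :))
  · exact index_centralizer_subgroupOf_le N H h hH

theorem commutatorElement_mem_of_mem_comap_centralizer {G : Type*} [Group G] {N : Subgroup G}
    [N.Normal] {h x : G}
    (hx : x ∈ (centralizer {(h : G ⧸ N)}).comap (QuotientGroup.mk' N)) : ⁅x, h⁆ ∈ N := by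
  rw [← QuotientGroup.eq_one_iff, ← QuotientGroup.mk'_apply, map_commutatorElement,
    commutatorElement_eq_one_iff_mul_comm]
  exact mem_centralizer_singleton_iff.mp hx

theorem card_centralizer_quotient_le {G : Type*} [Group G] [Finite G] (N : Subgroup G)
    [N.Normal] (h : G) :
    Nat.card (centralizer {(h : G ⧸ N)}) ≤ Nat.card (centralizer {h}) := by
  have hcard : Nat.card ((centralizer {(h : G ⧸ N)}).comap (QuotientGroup.mk' N)) =
      Nat.card N * Nat.card (centralizer {(h : G ⧸ N)}) :=
    QuotientGroup.card_preimage_mk N (centralizer {(h : G ⧸ N)} : Set (G ⧸ N))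
  have hle := card_le_card_centralizer_mul_card N _ h
    fun _ => commutatorElement_mem_of_mem_comap_centralizer
  rw [hcard, mul_comm] at hle
  exact Nat.le_of_mul_le_mul_right hle Nat.card_pos

theorem stmt5_general (G : Type*) [Group G] [Finite G] (Z : Subgroup G) [Z.Normal]
    (h : G) :
    Nat.card (Subgroup.centralizer ({(h : G ⧸ Z)} : Set (G ⧸ Z))) ≤
      Nat.card (Subgroup.centralizer ({h} : Set G)) :=
  card_centralizer_quotient_le Z h

theorem stmt5 (G : Type*) [Group G] [Finite G] (Z : Subgroup G) [Z.Normal]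
    (hZ : Z ≤ Subgroup.center G) (h : G) :
    Nat.card (Subgroup.centralizer ({(h : G ⧸ Z)} : Set (G ⧸ Z))) ≤
      Nat.card (Subgroup.centralizer ({h} : Set G)) :=
  stmt5_general G Z h
end

section
/- Let F be a finite field, n a positive integer, g ∈ GL_n(F), and δ > 0. If the centralizer of g in GL_n(F) has order greater than |F|^{2δn²}, then there exists a monic irreducible polynomial P ∈ F[x] and an eigenvalue λ of g (a root of P in the algebraic closure) whose eigenspace has dimension greater than δn. -/
/-! If every eigenvalue `μ` of `g` over the algebraic closure `K` has geometric multiplicity at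
most `m`, then `g - μ` is nilpotent on the generalized eigenspace `W_μ` with kernel of dimension
at most `m`, so `W_μ` is generated as a `K[g]`-module by `m` vectors `u_{μ,1}, …, u_{μ,m}`.
A matrix `X` commuting with `g` preserves every `W_μ`, and these are independent, so `X` is
determined by the `m` vectors `X (∑_μ u_{μ,i})`. So the commutant of `g` has dimension at most
`m n` over `K`, and also over `F`, since linear independence survives extending scalars. The
centralizer of `g` in `GL_n(F)` lies in the commutant, so it has at most `|F| ^ (m n)` elements;
with `m = ⌊δ n⌋` this contradicts the hypothesis. -/

open Module

theorem Submodule.eq_top_of_isNilpotent_of_sup_range_eq_top {R M : Type*} [Semiring R]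
    [AddCommMonoid M] [Module R M] {N : End R M} (hN : IsNilpotent N) {S : Submodule R M}
    (hS : Set.MapsTo N S S) (h : S ⊔ LinearMap.range N = ⊤) : S = ⊤ := by
  obtain ⟨e, he⟩ := hN
  have key : ∀ k, S ⊔ LinearMap.range (N ^ k) = ⊤ := by
    intro k
    induction k with
    | zero => simp [End.one_eq_id, LinearMap.range_id]
    | succ k ih =>
      refine eq_top_iff.2 (ih ▸ sup_le le_sup_left ?_)
      have hSk : S.map (N ^ k) ≤ S := Submodule.map_le_iff_le_comap.2 fun x hx => by
        simpa [End.coe_pow] using hS.iterate k hx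
      calc LinearMap.range (N ^ k)
          = (S ⊔ LinearMap.range N).map (N ^ k) := by rw [h, LinearMap.range_eq_map]
        _ = S.map (N ^ k) ⊔ LinearMap.range (N ^ (k + 1)) := by
          rw [Submodule.map_sup, pow_succ, End.mul_eq_comp, LinearMap.range_comp]
        _ ≤ S ⊔ LinearMap.range (N ^ (k + 1)) := sup_le_sup_right hSk _
  simpa [he] using key e

theorem Submodule.exists_fin_le_span_range {K V : Type*} [DivisionRing K] [AddCommGroup V]
    [Module K V] {p : Submodule K V} [FiniteDimensional K p] {M : ℕ} (hM : finrank K p ≤ M) :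
    ∃ u : Fin M → V, p ≤ Submodule.span K (Set.range u) := by
  have : FiniteDimensional K (Submodule.span K (p : Set V)) := by rwa [Submodule.span_eq]
  obtain ⟨b, -, hb, -⟩ := exists_fun_fin_finrank_span_eq K (p : Set V)
  rw [← Submodule.span_eq p] at hM
  refine ⟨fun i => if hi : (i : ℕ) < finrank K (Submodule.span K (p : Set V)) then b ⟨i, hi⟩
    else 0, (hb.trans p.span_eq).ge.trans (Submodule.span_mono ?_)⟩
  rintro - ⟨i, rfl⟩
  exact ⟨Fin.castLE hM i, by simp⟩

namespace Module.End

variable {K V : Type*} [Field K] [AddCommGroup V] [Module K V] [FiniteDimensional K V]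

theorem exists_span_range_pow_apply_eq_top {N : End K V} (hN : IsNilpotent N) {M : ℕ}
    (hM : finrank K (LinearMap.ker N) ≤ M) :
    ∃ u : Fin M → V,
      Submodule.span K (Set.range fun p : Fin M × ℕ => (N ^ p.2) (u p.1)) = ⊤ := by
  obtain ⟨C, hC⟩ := (LinearMap.range N).exists_isCompl
  have hCM : finrank K C ≤ M := by
    have := Submodule.finrank_add_eq_of_isCompl hC
    have := LinearMap.finrank_range_add_finrank_ker N
    omega
  obtain ⟨u, hu⟩ := Submodule.exists_fin_le_span_range hCM
  set G := Set.range fun p : Fin M × ℕ => (N ^ p.2) (u p.1)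
  refine ⟨u, Submodule.eq_top_of_isNilpotent_of_sup_range_eq_top hN ?_ ?_⟩
  · have hG : Submodule.span K G ≤ (Submodule.span K G).comap N := by
      refine Submodule.span_le.2 ?_
      rintro - ⟨⟨i, j⟩, rfl⟩
      exact Submodule.subset_span ⟨⟨i, j + 1⟩, by simp [pow_succ']⟩
    exact fun x hx => hG hx
  · have hCG : C ≤ Submodule.span K G := by
      refine hu.trans (Submodule.span_mono ?_)
      rintro - ⟨i, rfl⟩
      exact ⟨⟨i, 0⟩, by simp⟩
    exact eq_top_iff.2 (hC.sup_eq_top.ge.trans (sup_le le_sup_right (hCG.trans le_sup_left)))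

theorem exists_maxGenEigenspace_le_span (f : End K V) (μ : K) {M : ℕ}
    (hM : finrank K (f.eigenspace μ) ≤ M) :
    ∃ u : Fin M → V, (∀ i, u i ∈ f.maxGenEigenspace μ) ∧ f.maxGenEigenspace μ ≤
      Submodule.span K
        (Set.range fun p : Fin M × ℕ => ((f - algebraMap K (End K V) μ) ^ p.2) (u p.1)) := by
  set W := f.maxGenEigenspace μ
  have hW : ∀ x ∈ W, (f - algebraMap K (End K V) μ) x ∈ W := fun _ hx =>
    mapsTo_maxGenEigenspace_of_comm (Algebra.mul_sub_algebraMap_commutes f μ) μ hx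
  have hker : finrank K (LinearMap.ker ((f - algebraMap K (End K V) μ).restrict hW)) ≤ M := by
    have hE : LinearMap.ker (f - algebraMap K (End K V) μ) = f.eigenspace μ := by
      rw [eigenspace_def, Algebra.algebraMap_eq_smul_one]
    rwa [LinearMap.ker_restrict hW, hE,
      (Submodule.comapSubtypeEquivOfLe eigenspace_le_maxGenEigenspace).finrank_eq]
  obtain ⟨u, hu⟩ := exists_span_range_pow_apply_eq_top
    (isNilpotent_restrict_maxGenEigenspace_sub_algebraMap f μ hW) hker
  refine ⟨fun i => u i, fun i => (u i).2, ?_⟩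
  calc W = (⊤ : Submodule K W).map W.subtype := by simp
    _ ≤ _ := by
      rw [← hu, Submodule.map_span, ← Set.range_comp]
      refine le_of_eq (congrArg _ (congrArg _ (funext fun p => ?_)))
      simp only [Function.comp_apply, Submodule.subtype_apply]
      rw [pow_restrict]
      rfl

theorem span_range_pow_apply_le_ker {R M : Type*} [Semiring R] [AddCommMonoid M] [Module R M]
    {N X : End R M} (hNX : Commute N X) {ι : Type*} {u : ι → M} (hu : ∀ i, X (u i) = 0) :
    Submodule.span R (Set.range fun p : ι × ℕ => (N ^ p.2) (u p.1)) ≤ LinearMap.ker X := by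
  refine Submodule.span_le.2 ?_
  rintro - ⟨⟨i, j⟩, rfl⟩
  change X ((N ^ j) (u i)) = 0
  rw [← mul_apply, ← (hNX.pow_left j).eq, mul_apply, hu, map_zero]

theorem finrank_centralizer_le [IsAlgClosed K] (f : End K V) {M : ℕ}
    (hM : ∀ μ, finrank K (f.eigenspace μ) ≤ M) :
    finrank K (Subalgebra.centralizer K {f}) ≤ M * finrank K V := by
  classical
  choose u hu_mem hu_span using fun μ => f.exists_maxGenEigenspace_le_span μ (hM μ)
  have hind := f.independent_maxGenEigenspace
  set s := (WellFoundedGT.finite_ne_bot_of_iSupIndep hind).toFinset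
  let Φ : Subalgebra.centralizer K {f} →ₗ[K] Fin M → V :=
    LinearMap.pi fun i => (LinearMap.applyₗ (∑ μ ∈ s, u μ i)).comp
      (Subalgebra.toSubmodule (Subalgebra.centralizer K {f})).subtype
  have hΦ : Function.Injective Φ := by
    rw [← LinearMap.ker_eq_bot, eq_bot_iff]
    rintro ⟨X, hX⟩ hΦX
    have hfX : Commute f X := (Subalgebra.mem_centralizer_iff K).1 hX f rfl
    have hkill : ∀ μ ∈ s, ∀ i, X (u μ i) = 0 := fun μ hμ i =>
      (iSupIndep_iff_finsetSum_eq_zero_imp_eq_zero _).1 hind s (fun μ => X (u μ i))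
        (fun μ _ => mapsTo_maxGenEigenspace_of_comm hfX μ (hu_mem μ i))
        ((map_sum X _ s).symm.trans (congrFun (LinearMap.mem_ker.1 hΦX) i)) μ hμ
    have hW : ∀ μ, f.maxGenEigenspace μ ≤ LinearMap.ker X := by
      intro μ
      by_cases hμ : μ ∈ s
      · exact (hu_span μ).trans (span_range_pow_apply_le_ker
          (hfX.sub_left (Algebra.commute_algebraMap_left μ X)) (hkill μ hμ))
      · simp only [s, Set.Finite.mem_toFinset, Set.mem_ofPred_eq, not_not] at hμ
        simp [hμ]
    have hX0 : X = 0 := LinearMap.ker_eq_top.1 <|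
      eq_top_iff.2 (f.iSup_maxGenEigenspace_eq_top ▸ iSup_le hW)
    exact (Submodule.mem_bot K).2 (Subtype.ext hX0)
  calc finrank K (Subalgebra.centralizer K {f})
      ≤ finrank K (Fin M → V) := LinearMap.finrank_le_finrank_of_injective hΦ
    _ = M * finrank K V := by simp [Module.finrank_pi_fintype]

end Module.End

theorem AlgEquiv.finrank_centralizer_apply {R A B : Type*} [CommRing R] [Ring A] [Ring B]
    [Algebra R A] [Algebra R B] (e : A ≃ₐ[R] B) (a : A) :
    finrank R (Subalgebra.centralizer R {e a}) = finrank R (Subalgebra.centralizer R {a}) := by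
  have h : Subalgebra.toSubmodule (Subalgebra.centralizer R {e a}) =
      (Subalgebra.toSubmodule (Subalgebra.centralizer R {a})).map e.toLinearEquiv.toLinearMap := by
    ext x
    rw [Submodule.mem_map_equiv]
    simp only [Subalgebra.mem_toSubmodule, Subalgebra.mem_centralizer_iff, Set.mem_singleton_iff,
      forall_eq]
    rw [← e.injective.eq_iff, map_mul, map_mul]
    simp
  rw [← Subalgebra.finrank_toSubmodule, h, e.toLinearEquiv.finrank_map_eq,
    Subalgebra.finrank_toSubmodule]

theorem Matrix.finrank_centralizer_mulVecLin {K n : Type*} [Field K] [Fintype n] [DecidableEq n]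
    (B : Matrix n n K) :
    finrank K (Subalgebra.centralizer K {B.mulVecLin}) =
      finrank K (Subalgebra.centralizer K {B}) := by
  rw [← AlgEquiv.finrank_centralizer_apply Matrix.toLinAlgEquiv' B]
  congr

theorem Matrix.linearIndependent_map_algebraMap {F K m n ι : Type*} [Field F] [Field K]
    [Algebra F K] [Finite m] [Finite n] {v : ι → Matrix m n F} (hv : LinearIndependent F v) :
    LinearIndependent K fun i => (v i).map (algebraMap F K) := by
  have hflat : LinearIndependent F fun i => (LinearEquiv.curry F F m n).symm (v i) :=
    hv.map' _ (LinearEquiv.curry F F m n).symm.ker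
  have := (linearIndependent_algebraMap_comp_iff (S := K)).2 hflat
  exact this.map' _ (LinearEquiv.curry K K m n).ker

theorem Matrix.finrank_centralizer_le_finrank_centralizer_map {F K n : Type*} [Field F]
    [Field K] [Algebra F K] [Fintype n] [DecidableEq n] (A : Matrix n n F) :
    finrank F (Subalgebra.centralizer F {A}) ≤
      finrank K (Subalgebra.centralizer K {A.map (algebraMap F K)}) := by
  let b := Module.finBasis F (Subalgebra.centralizer F {A})
  let v : Fin _ → Subalgebra.centralizer K {A.map (algebraMap F K)} := fun i =>
    ⟨(b i : Matrix n n F).map (algebraMap F K), by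
      have hA := (Subalgebra.mem_centralizer_iff F).1 (b i).2 A rfl
      rintro _ rfl
      rw [← Matrix.map_mul, ← Matrix.map_mul, hA]⟩
  have hb : LinearIndependent F fun i => (b i : Matrix n n F) :=
    b.linearIndependent.map' (Subalgebra.toSubmodule (Subalgebra.centralizer F {A})).subtype
      (Submodule.ker_subtype _)
  have hv : LinearIndependent K v :=
    LinearIndependent.of_comp
      (Subalgebra.toSubmodule (Subalgebra.centralizer K {A.map (algebraMap F K)})).subtype
      (Matrix.linearIndependent_map_algebraMap hb)
  simpa using hv.fintype_card_le_finrank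

theorem Units.natCard_centralizer_le {F A : Type*} [Field F] [Fintype F] [Ring A] [Algebra F A]
    [FiniteDimensional F A] (g : Aˣ) :
    Nat.card (Subgroup.centralizer {g}) ≤
      Fintype.card F ^ finrank F (Subalgebra.centralizer F {(g : A)}) := by
  have : Finite A := Module.finite_of_finite F
  let ι : Subgroup.centralizer {g} → Subalgebra.centralizer F {(g : A)} := fun h =>
    ⟨h.1, by
      rintro _ rfl
      exact congrArg Units.val ((Subgroup.mem_centralizer_iff.1 h.2) g rfl)⟩
  have hι : Function.Injective ι := fun h h' hh =>
    Subtype.ext (Units.ext (congrArg Subtype.val hh))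
  calc Nat.card (Subgroup.centralizer {g})
      ≤ Nat.card (Subalgebra.centralizer F {(g : A)}) := Nat.card_le_card_of_injective ι hι
    _ = Fintype.card F ^ finrank F (Subalgebra.centralizer F {(g : A)}) := by
      rw [Module.natCard_eq_pow_finrank (K := F), Nat.card_eq_fintype_card]

theorem stmt10 (F : Type*) [Field F] [Fintype F] (n : ℕ) (g : GL (Fin n) F)
    (δ : ℝ) (hδ : 0 < δ)
    (hcent : ((Fintype.card F : ℝ)) ^ (2 * δ * (n : ℝ) ^ 2) <
      (Nat.card (Subgroup.centralizer ({g} : Set (GL (Fin n) F))) : ℝ)) :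
    ∃ P : Polynomial F, P.Monic ∧ Irreducible P ∧
      ∃ lam : AlgebraicClosure F, (Polynomial.aeval lam) P = 0 ∧
        δ * (n : ℝ) <
          (Module.finrank (AlgebraicClosure F)
            (Module.End.eigenspace
              (Matrix.mulVecLin
                ((g : Matrix (Fin n) (Fin n) F).map (algebraMap F (AlgebraicClosure F))))
              lam) : ℝ) := by
  by_contra! hsmall
  set K := AlgebraicClosure F
  set A := (g : Matrix (Fin n) (Fin n) F)
  set M := ⌊δ * n⌋₊
  have hM : ∀ μ : K, finrank K (End.eigenspace (A.map (algebraMap F K)).mulVecLin μ) ≤ M :=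
    fun μ =>
    have hμ : IsIntegral F μ := Algebra.IsIntegral.isIntegral μ
    Nat.le_floor (hsmall _ (minpoly.monic hμ) (minpoly.irreducible hμ) μ (minpoly.aeval F μ))
  have hdim : finrank F (Subalgebra.centralizer F {A}) ≤ M * n :=
    calc _ ≤ finrank K (Subalgebra.centralizer K {A.map (algebraMap F K)}) :=
          Matrix.finrank_centralizer_le_finrank_centralizer_map A
      _ = finrank K (Subalgebra.centralizer K {(A.map (algebraMap F K)).mulVecLin}) :=
          (Matrix.finrank_centralizer_mulVecLin _).symm
      _ ≤ M * n := by simpa using End.finrank_centralizer_le _ hM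
  have hMn : (M * n : ℝ) ≤ 2 * δ * n ^ 2 := by
    have := Nat.floor_le (by positivity : 0 ≤ δ * n)
    nlinarith
  refine hcent.not_ge ?_
  calc (Nat.card (Subgroup.centralizer {g}) : ℝ)
      ≤ (Fintype.card F : ℝ) ^ (M * n) := by
        exact_mod_cast (Units.natCard_centralizer_le g).trans
          (Nat.pow_le_pow_right Fintype.card_pos hdim)
    _ ≤ (Fintype.card F : ℝ) ^ (2 * δ * n ^ 2) := by
      rw [← Real.rpow_natCast]
      exact Real.rpow_le_rpow_of_exponent_le (by exact_mod_cast Fintype.card_pos)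
        (by exact_mod_cast hMn)
end

section
/- Let h_1 > h_2 > ... > h_t ≥ 1 be odd positive integers. Then the product h_1 h_2 ··· h_t < 37 · 2^{(h_1 + h_2 + ... + h_t)/4}. -/
/-!
Write `n = r(n) · 2^(n/4)` with `r(n) = n / 2^(n/4)`. Then `r(n) ≥ 1` iff `2^n ≤ n^4`, which among
odd `n` happens exactly for `3 ≤ n ≤ 15`. Hence over any set of distinct odd numbers the product of
the `r(n)` is at most `r(3) r(5) ⋯ r(15) = 2027025 / 2^(63/4) ≈ 36.8`.
-/

open Real Finset

namespace Finset

variable {ι R : Type*} [CommMonoidWithZero R] [Preorder R] [ZeroLEOneClass R] [PosMulMono R]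

theorem prod_le_prod_of_le_one_of_notMem [DecidableEq ι] {f : ι → R} {s t : Finset ι}
    (hs₀ : ∀ i ∈ s, 0 ≤ f i) (hs : ∀ i ∈ s, i ∉ t → f i ≤ 1) (ht : ∀ i ∈ t, 1 ≤ f i) :
    ∏ i ∈ s, f i ≤ ∏ i ∈ t, f i :=
  calc ∏ i ∈ s, f i
      ≤ ∏ i ∈ s ∪ t, f i :=
        prod_le_prod_of_subset_of_one_le subset_union_left hs₀ fun i hi his =>
          ht i ((mem_union.1 hi).resolve_left his)
    _ ≤ ∏ i ∈ t, f i :=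
        prod_le_prod_of_subset_of_le_one subset_union_right
          (fun i hi => (mem_union.1 hi).elim (hs₀ i) fun hit => zero_le_one.trans (ht i hit))
          fun i hi hit => hs i ((mem_union.1 hi).resolve_right hit) hit

end Finset

theorem pow_four_le_two_pow {n : ℕ} (hn : 17 ≤ n) : n ^ 4 ≤ 2 ^ n := by
  induction n, hn using Nat.le_induction with
  | base => norm_num
  | succ m hm ih =>
    calc (m + 1) ^ 4 ≤ 2 * m ^ 4 := by
          nlinarith [Nat.mul_le_mul_right (m ^ 3) hm, Nat.mul_le_mul_right (m ^ 2) hm,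
            Nat.mul_le_mul_right m hm]
      _ ≤ 2 ^ (m + 1) := by rw [pow_succ' 2 m]; omega

theorem two_rpow_div_four_pow_four (x : ℝ) : ((2 : ℝ) ^ (x / 4)) ^ 4 = 2 ^ x := by
  rw [← rpow_mul_natCast zero_le_two, Nat.cast_ofNat, div_mul_cancel₀ x four_ne_zero]

noncomputable def quarterRatio (n : ℕ) : ℝ := n / 2 ^ ((n : ℝ) / 4)

theorem natCast_eq_quarterRatio_mul (n : ℕ) : (n : ℝ) = quarterRatio n * 2 ^ ((n : ℝ) / 4) :=
  (div_mul_cancel₀ _ (rpow_pos_of_pos two_pos _).ne').symm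

theorem quarterRatio_nonneg (n : ℕ) : 0 ≤ quarterRatio n := by
  unfold quarterRatio
  positivity

theorem quarterRatio_le_one_iff (n : ℕ) : quarterRatio n ≤ 1 ↔ n ^ 4 ≤ 2 ^ n := by
  rw [quarterRatio, div_le_one (rpow_pos_of_pos two_pos _),
    ← pow_le_pow_iff_left₀ n.cast_nonneg (rpow_nonneg zero_le_two _) four_ne_zero,
    two_rpow_div_four_pow_four, rpow_natCast]
  exact_mod_cast Iff.rfl

theorem one_le_quarterRatio_iff (n : ℕ) : 1 ≤ quarterRatio n ↔ 2 ^ n ≤ n ^ 4 := by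
  rw [quarterRatio, one_le_div (rpow_pos_of_pos two_pos _),
    ← pow_le_pow_iff_left₀ (rpow_nonneg zero_le_two _) n.cast_nonneg four_ne_zero,
    two_rpow_div_four_pow_four, rpow_natCast]
  exact_mod_cast Iff.rfl

abbrev smallOdds : Finset ℕ := {3, 5, 7, 9, 11, 13, 15}

theorem quarterRatio_le_one_of_odd {n : ℕ} (hn : Odd n) (hn' : n ∉ smallOdds) :
    quarterRatio n ≤ 1 := by
  rw [quarterRatio_le_one_iff]
  obtain rfl | h17 : n = 1 ∨ 17 ≤ n := by
    obtain ⟨k, rfl⟩ := hn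
    simp only [mem_insert, mem_singleton] at hn'
    omega
  · norm_num
  · exact pow_four_le_two_pow h17

theorem one_le_quarterRatio_of_mem_smallOdds {n : ℕ} (hn : n ∈ smallOdds) :
    1 ≤ quarterRatio n := by
  rw [one_le_quarterRatio_iff]
  fin_cases hn <;> norm_num

theorem prod_quarterRatio_smallOdds_lt : ∏ n ∈ smallOdds, quarterRatio n < 37 := by
  have hden : ∏ n ∈ smallOdds, (2 : ℝ) ^ ((n : ℝ) / 4) = 2 ^ ((63 : ℝ) / 4) := by
    rw [← rpow_sum_of_pos two_pos]
    norm_num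
  have hpos : (0 : ℝ) < 2 ^ ((63 : ℝ) / 4) := rpow_pos_of_pos two_pos _
  unfold quarterRatio
  rw [prod_div_distrib, hden, div_lt_iff₀ hpos]
  refine lt_of_pow_lt_pow_left₀ 4 (by positivity) ?_
  rw [mul_pow, two_rpow_div_four_pow_four]
  norm_num

theorem prod_quarterRatio_lt_of_odd {s : Finset ℕ} (hs : ∀ n ∈ s, Odd n) :
    ∏ n ∈ s, quarterRatio n < 37 :=
  (prod_le_prod_of_le_one_of_notMem (fun n _ => quarterRatio_nonneg n)
    (fun n hn => quarterRatio_le_one_of_odd (hs n hn))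
    fun _ => one_le_quarterRatio_of_mem_smallOdds).trans_lt prod_quarterRatio_smallOdds_lt

theorem stmt12_general (t : ℕ) (h : Fin t → ℕ) (hdec : StrictAnti h)
    (hodd : ∀ i, Odd (h i)) :
    (∏ i, (h i : ℝ)) < 37 * (2 : ℝ) ^ ((∑ i, (h i : ℝ)) / 4) := by
  have hsplit : ∏ i, (h i : ℝ) = (∏ i, quarterRatio (h i)) * 2 ^ ((∑ i, (h i : ℝ)) / 4) := by
    rw [sum_div, rpow_sum_of_pos two_pos, ← prod_mul_distrib]
    exact prod_congr rfl fun i _ => natCast_eq_quarterRatio_mul (h i)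
  have hratio : ∏ i, quarterRatio (h i) < 37 := by
    rw [← prod_image fun i _ j _ hij => hdec.injective hij]
    exact prod_quarterRatio_lt_of_odd (by simpa using fun i => hodd i)
  rw [hsplit]
  exact mul_lt_mul_of_pos_right hratio (rpow_pos_of_pos two_pos _)

theorem stmt12 (t : ℕ) (h : Fin t → ℕ) (hdec : StrictAnti h)
    (hodd : ∀ i, Odd (h i)) (hpos : ∀ i, 1 ≤ h i) :
    (∏ i, (h i : ℝ)) < 37 * (2 : ℝ) ^ ((∑ i, (h i : ℝ)) / 4) :=
  stmt12_general t h hdec hodd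
end
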